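/- arXiv:1411.2620 — 5 statements merged into one kernel-verified Lean document; each statement's English description precedes it below -/
import Mathlib

section
/- Let γ > 0, p > 1 and ω > γ²/4, and let φ_ω be as defined. Then φ_ω is even, strictly positive, continuous on ℝ, twice continuously differentiable on ℝ \ {0}, satisfies the ordinary differential equation -φ_ω''(x) + ω φ_ω(x) - φ_ω(x)^p = 0 for every x ≠ 0, has one-sided derivatives at 0 satisfying φ_ω'(0+) - φ_ω'(0-) = -γ φ_ω(0) (equivalently φ_ω'(0+) = -(γ/2) φ_ω(0)), and φ_ω and its derivative belong to L²(ℝ). -/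
open MeasureTheory Set
open scoped ENNReal

noncomputable section

/-- Inverse hyperbolic tangent. -/
def artanh (x : ℝ) : ℝ := Real.log ((1 + x) / (1 - x)) / 2

/-- Squared `L²` norm of `v`. -/
def l2Sq (v : ℝ → ℂ) : ℝ := ∫ x : ℝ, ‖v x‖ ^ 2

/-- Squared `L²` norm of the derivative of `v`. -/
def gradSq (v : ℝ → ℂ) : ℝ := ∫ x : ℝ, ‖deriv v x‖ ^ 2

/-- `∫ |v|^(p+1)`, i.e. `‖v‖_{L^{p+1}}^{p+1}`. -/
def lpPow (p : ℝ) (v : ℝ → ℂ) : ℝ := ∫ x : ℝ, ‖v x‖ ^ (p + 1)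

/-- `v ∈ H¹(ℝ)`, expressed via its continuous representative: `v` is square
integrable, absolutely continuous with a.e. derivative `deriv v`, which is
square integrable. -/
def MemH1 (v : ℝ → ℂ) : Prop :=
  Continuous v ∧ MemLp v 2 volume ∧ MemLp (deriv v) 2 volume ∧
    ∀ x : ℝ, v x = v 0 + ∫ t in (0:ℝ)..x, deriv v t

/-- The energy functional `E`. -/
def En (γ p : ℝ) (v : ℝ → ℂ) : ℝ :=
  gradSq v / 2 - γ / 2 * ‖v 0‖ ^ 2 - lpPow p v / (p + 1)

/-- The Nehari functional `K_ω`. -/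
def Kfun (γ p ω : ℝ) (v : ℝ → ℂ) : ℝ :=
  gradSq v + ω * l2Sq v - γ * ‖v 0‖ ^ 2 - lpPow p v

/-- The virial functional `P`. -/
def Pfun (γ p : ℝ) (v : ℝ → ℂ) : ℝ :=
  gradSq v - γ / 2 * ‖v 0‖ ^ 2 - (p - 1) / (2 * (p + 1)) * lpPow p v

/-- The action functional `S_ω`. -/
def Sfun (γ p ω : ℝ) (v : ℝ → ℂ) : ℝ := En γ p v + ω / 2 * l2Sq v

/-- The minimal action `d(ω)` on the Nehari manifold. -/
def dInf (γ p ω : ℝ) : ℝ :=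
  sInf {s : ℝ | ∃ v : ℝ → ℂ, MemH1 v ∧ v ≠ 0 ∧ Kfun γ p ω v = 0 ∧ s = Sfun γ p ω v}

/-- The explicit standing wave profile `φ_ω`. -/
def phi (γ p ω : ℝ) (x : ℝ) : ℝ :=
  ((p + 1) * ω / 2 *
      (1 / Real.cosh ((p - 1) * Real.sqrt ω / 2 * |x| + artanh (γ / (2 * Real.sqrt ω)))) ^ 2)
    ^ (1 / (p - 1))

/-- `φ_ω` as a complex valued function. -/
def phiC (γ p ω : ℝ) : ℝ → ℂ := fun x => (phi γ p ω x : ℂ)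

/-- The `L²`-invariant scaling `v^λ(x) = λ^{1/2} v(λ x)`. -/
def scale (l : ℝ) (v : ℝ → ℂ) : ℝ → ℂ := fun x => (Real.sqrt l : ℂ) * v (l * x)

/-- The set `𝓑_ω`. -/
def inB (γ p ω : ℝ) (v : ℝ → ℂ) : Prop :=
  MemH1 v ∧ 0 < En γ p v ∧ En γ p v < En γ p (phiC γ p ω) ∧
    l2Sq v = l2Sq (phiC γ p ω) ∧ Pfun γ p v < 0 ∧ Kfun γ p ω v < 0

/-!
With `k = 2/(p-1)`, `a = (p-1)√ω/2`, `b = artanh ξ` and `c^(p-1) = (p+1)ω/2`, the profile is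
`φ_ω x = F |x|` for the smooth function `F t = c sechᵏ (a t + b)`. Since
`F' = -k a tanh(a t + b) F`, `F'' = a² (k (k+1) tanh² - k) F` and
`F^p = c^(p-1) sech² F = (p+1)ω/2 (1 - tanh²) F`, the relation `k a = √ω` turns
`-F'' + ω F - F^p = 0` into an identity in `tanh`. The one-sided derivatives of `φ_ω` at `0`
are `±F'(0) = ∓√ω tanh(b) F(0) = ∓(γ/2) φ_ω(0)`. Finally `F t ≤ C e^{-√ω t}` and
`|F'| ≤ k a F = √ω F` make `φ_ω` and `φ_ω'` square integrable.
-/open Real Topology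

namespace Real

theorem hasDerivAt_tanh (x : ℝ) : HasDerivAt tanh (1 - tanh x ^ 2) x := by
  have h := (hasDerivAt_sinh x).div (hasDerivAt_cosh x) (cosh_pos x).ne'
  rw [show sinh / cosh = tanh from funext fun y => (tanh_eq_sinh_div_cosh y).symm] at h
  refine h.congr_deriv ?_
  rw [tanh_eq_sinh_div_cosh]
  field_simp

theorem one_sub_tanh_sq (x : ℝ) : 1 - tanh x ^ 2 = (cosh x ^ 2)⁻¹ := by
  have := cosh_sq' x
  rw [tanh_eq_sinh_div_cosh]
  field_simp
  linarith

theorem cosh_rpow_neg_le {k : ℝ} (hk : 0 ≤ k) (x : ℝ) :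
    cosh x ^ (-k) ≤ 2 ^ k * exp (-(k * x)) := by
  have hx : exp x / 2 ≤ cosh x := by
    rw [cosh_eq]
    linarith [exp_pos (-x)]
  calc cosh x ^ (-k) ≤ (exp x / 2) ^ (-k) :=
        rpow_le_rpow_of_nonpos (by positivity) hx (neg_nonpos.2 hk)
    _ = 2 ^ k * exp (-(k * x)) := by
        rw [div_rpow (exp_pos x).le zero_le_two, ← exp_mul, rpow_neg zero_le_two, div_inv_eq_mul]
        ring_nf

end Real

section AbsComp

variable {F : ℝ → ℝ} {x : ℝ}

theorem deriv_deriv_comp_abs (hx : x ≠ 0) :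
    deriv (deriv fun y => F |y|) x = deriv (deriv F) |x| := by
  rcases hx.lt_or_gt with hx | hx
  · have h : (fun y => F |y|) =ᶠ[𝓝 x] fun y => F (-y) := by
      filter_upwards [Iio_mem_nhds hx] with y hy
      rw [abs_of_neg hy]
    have hd : deriv (fun y => F (-y)) = fun y => -deriv F (-y) :=
      funext fun y => deriv_comp_neg F y
    rw [h.deriv.deriv_eq, hd, deriv.fun_neg, deriv_comp_neg, neg_neg, abs_of_neg hx]
  · have h : (fun y => F |y|) =ᶠ[𝓝 x] F := by
      filter_upwards [Ioi_mem_nhds hx] with y hy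
      rw [abs_of_pos hy]
    rw [h.deriv.deriv_eq, abs_of_pos hx]

theorem abs_deriv_comp_abs (hx : x ≠ 0) :
    |deriv (fun y => F |y|) x| = |deriv F (|x|)| := by
  rcases hx.lt_or_gt with hx | hx
  · have h : (fun y => F |y|) =ᶠ[𝓝 x] fun y => F (-y) := by
      filter_upwards [Iio_mem_nhds hx] with y hy
      rw [abs_of_neg hy]
    rw [h.deriv_eq, deriv_comp_neg, abs_neg, abs_of_neg hx]
  · have h : (fun y => F |y|) =ᶠ[𝓝 x] F := by
      filter_upwards [Ioi_mem_nhds hx] with y hy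
      rw [abs_of_pos hy]
    rw [h.deriv_eq, abs_of_pos hx]

theorem HasDerivAt.comp_abs_Ici {F' : ℝ} (h : HasDerivAt F F' 0) :
    HasDerivWithinAt (fun y => F |y|) F' (Ici 0) 0 :=
  h.hasDerivWithinAt.congr (fun y hy => by rw [abs_of_nonneg hy]) (by rw [abs_zero])

theorem HasDerivAt.comp_abs_Iic {F' : ℝ} (h : HasDerivAt F F' 0) :
    HasDerivWithinAt (fun y => F |y|) (-F') (Iic 0) 0 := by
  have h' : HasDerivAt (fun y => F (-y)) (-F') 0 := by
    simpa [Function.comp_def] using h.comp_of_eq 0 (hasDerivAt_neg 0) neg_zero.symm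
  exact h'.hasDerivWithinAt.congr (fun y hy => by rw [abs_of_nonpos hy]) (by simp)

end AbsComp

theorem integrable_exp_neg_mul_abs {t : ℝ} (ht : 0 < t) :
    Integrable fun x : ℝ => exp (-(t * |x|)) := by
  have hIoi : IntegrableOn (fun x : ℝ => exp (-(t * |x|))) (Ioi 0) :=
    (exp_neg_integrableOn_Ioi 0 ht).congr_fun
      (fun x hx => by simp only [abs_of_pos (mem_Ioi.1 hx), neg_mul]) measurableSet_Ioi
  have hIio : IntegrableOn (fun x : ℝ => exp (-(t * |x|))) (Iio 0) := by
    simpa using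
      (show IntegrableOn (fun x : ℝ => exp (-(t * |x|))) (Ioi (-0)) by
        rwa [neg_zero]).comp_neg_Iio
  rw [← integrableOn_univ, ← Iio_union_Ici (a := (0 : ℝ)), integrableOn_union,
    integrableOn_Ici_iff_integrableOn_Ioi]
  exact ⟨hIio, hIoi⟩

theorem memLp_two_exp_neg_mul_abs {t : ℝ} (ht : 0 < t) :
    MemLp (fun x : ℝ => exp (-(t * |x|))) 2 volume := by
  refine (memLp_two_iff_integrable_sq (by fun_prop)).2 ?_
  simpa [← exp_nat_mul, mul_assoc] using integrable_exp_neg_mul_abs (mul_pos two_pos ht)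

def sechPow (c a b k t : ℝ) : ℝ := c * cosh (a * t + b) ^ (-k)

namespace sechPow

variable {c a b k : ℝ}

theorem pos (hc : 0 < c) (t : ℝ) : 0 < sechPow c a b k t :=
  mul_pos hc (rpow_pos_of_pos (cosh_pos _) _)

theorem hasDerivAt (t : ℝ) :
    HasDerivAt (sechPow c a b k) (-k * a * tanh (a * t + b) * sechPow c a b k t) t := by
  have hu : HasDerivAt (fun t => a * t + b) a t := by
    simpa using ((hasDerivAt_id t).const_mul a).add_const b
  have h := ((hasDerivAt_cosh _).comp t hu).rpow_const (p := -k)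
    (Or.inl (cosh_pos _).ne') |>.const_mul c
  refine h.congr_deriv ?_
  rw [Function.comp_apply, sechPow, rpow_sub_one (cosh_pos _).ne', tanh_eq_sinh_div_cosh]
  ring

theorem deriv_eq : deriv (sechPow c a b k) =
    fun t => -k * a * tanh (a * t + b) * sechPow c a b k t :=
  funext fun t => (hasDerivAt t).deriv

theorem deriv_deriv (t : ℝ) : deriv (deriv (sechPow c a b k)) t =
    a ^ 2 * (k * (k + 1) * tanh (a * t + b) ^ 2 - k) * sechPow c a b k t := by
  have hu : HasDerivAt (fun t => a * t + b) a t := by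
    simpa using ((hasDerivAt_id t).const_mul a).add_const b
  have h := (((hasDerivAt_tanh _).comp t hu).const_mul (-k * a)).mul
    (hasDerivAt (c := c) (a := a) (b := b) (k := k) t)
  rw [deriv_eq]
  refine (h.congr_deriv ?_).deriv
  rw [Function.comp_apply]
  ring

theorem contDiff {n : WithTop ℕ∞} : ContDiff ℝ n (sechPow c a b k) :=
  contDiff_const.mul <|
    (contDiff_cosh.comp (contDiff_const.mul contDiff_id |>.add contDiff_const)).rpow_const_of_ne
      fun _ => (cosh_pos _).ne'

theorem rpow_eq (hc : 0 < c) (p t : ℝ) : sechPow c a b k t ^ p =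
    c ^ (p - 1) * cosh (a * t + b) ^ (-(k * (p - 1))) * sechPow c a b k t := by
  have hcosh := cosh_pos (a * t + b)
  have hc' : c ^ p = c ^ (p - 1) * c := by
    rw [rpow_sub_one hc.ne', div_mul_cancel₀ _ hc.ne']
  have hcosh' : cosh (a * t + b) ^ (-k * p) =
      cosh (a * t + b) ^ (-(k * (p - 1))) * cosh (a * t + b) ^ (-k) := by
    rw [← rpow_add hcosh]
    ring_nf
  rw [sechPow, mul_rpow hc.le (rpow_nonneg hcosh.le _), ← rpow_mul hcosh.le, hc', hcosh']
  ring

theorem le_exp (hc : 0 ≤ c) (hk : 0 ≤ k) (t : ℝ) :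
    sechPow c a b k t ≤ c * 2 ^ k * exp (-(k * (a * t + b))) := by
  rw [sechPow, mul_assoc]
  exact mul_le_mul_of_nonneg_left (cosh_rpow_neg_le hk _) hc

theorem abs_deriv_le (hc : 0 ≤ c) (hk : 0 ≤ k) (t : ℝ) :
    |deriv (sechPow c a b k) t| ≤ k * |a| * sechPow c a b k t := by
  have hS : 0 ≤ sechPow c a b k t := mul_nonneg hc (rpow_nonneg (cosh_pos _).le _)
  rw [deriv_eq, abs_mul, abs_mul, abs_mul, abs_neg, abs_of_nonneg hk, abs_of_nonneg hS]
  have := (abs_tanh_lt_one (a * t + b)).le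
  gcongr ?_ * _
  exact mul_le_of_le_one_right (by positivity) this

end sechPow

theorem artanh_eq_real_artanh {x : ℝ} (hx : x ∈ Icc (-1) 1) :
    _root_.artanh x = Real.artanh x := by
  rw [_root_.artanh, Real.artanh_eq_half_log hx]
  ring

theorem div_two_mul_sqrt_mem_Ioo {γ ω : ℝ} (h : γ ^ 2 / 4 < ω) :
    γ / (2 * √ω) ∈ Ioo (-1) 1 := by
  have hω : 0 < ω := (by positivity : 0 ≤ γ ^ 2 / 4).trans_lt h
  have hs : 0 < 2 * √ω := by positivity
  have hγ : |γ| < 2 * √ω := abs_lt_of_sq_lt_sq (by nlinarith [sq_sqrt hω.le]) hs.le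
  rw [mem_Ioo, lt_div_iff₀ hs, div_lt_iff₀ hs]
  constructor <;> linarith [abs_lt.1 hγ]

section Profile

variable {γ p ω : ℝ}

def phiProfile (γ p ω : ℝ) : ℝ → ℝ :=
  sechPow (((p + 1) * ω / 2) ^ (1 / (p - 1))) ((p - 1) * √ω / 2)
    (_root_.artanh (γ / (2 * √ω))) (2 / (p - 1))

theorem phi_eq_phiProfile_abs (hp : -1 ≤ p) (hω : 0 ≤ ω) :
    phi γ p ω = fun x => phiProfile γ p ω |x| := by
  funext x
  set u := (p - 1) * √ω / 2 * |x| + _root_.artanh (γ / (2 * √ω))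
  have hcosh := cosh_pos u
  have hsq : (1 / cosh u) ^ 2 = cosh u ^ (-2 : ℝ) := by
    rw [rpow_neg hcosh.le, one_div, inv_pow, rpow_two]
  rw [phi, phiProfile, sechPow, hsq, mul_rpow (by nlinarith) (rpow_nonneg hcosh.le _),
    ← rpow_mul hcosh.le]
  congr 2
  ring

theorem phiProfile_pos (hp : -1 < p) (hω : 0 < ω) (t : ℝ) : 0 < phiProfile γ p ω t :=
  sechPow.pos (rpow_pos_of_pos (by nlinarith) _) t

theorem deriv_deriv_phiProfile (hp : 1 < p) (hω : 0 < ω) (t : ℝ) :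
    deriv (deriv (phiProfile γ p ω)) t =
      ω * phiProfile γ p ω t - phiProfile γ p ω t ^ p := by
  have hA : 0 < (p + 1) * ω / 2 := by nlinarith
  have hp1 : p - 1 ≠ 0 := by linarith
  have hsq : √ω ^ 2 = ω := sq_sqrt hω.le
  unfold phiProfile
  rw [sechPow.deriv_deriv, sechPow.rpow_eq (rpow_pos_of_pos hA _), ← rpow_mul hA.le,
    one_div_mul_cancel hp1, rpow_one, div_mul_cancel₀ _ hp1, rpow_neg (cosh_pos _).le,
    rpow_two, ← one_sub_tanh_sq]
  field_simp
  rw [hsq]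
  ring

theorem hasDerivAt_phiProfile_zero (hp : 1 < p) (hω : γ ^ 2 / 4 < ω) :
    HasDerivAt (phiProfile γ p ω) (-(γ / 2) * phiProfile γ p ω 0) 0 := by
  have hξ := div_two_mul_sqrt_mem_Ioo hω
  have hs : 0 < √ω := sqrt_pos.2 ((by positivity : 0 ≤ γ ^ 2 / 4).trans_lt hω)
  have hp1 : p - 1 ≠ 0 := by linarith
  unfold phiProfile
  convert sechPow.hasDerivAt 0 using 2
  rw [mul_zero, zero_add, artanh_eq_real_artanh (Ioo_subset_Icc_self hξ), tanh_artanh hξ]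
  field_simp

theorem exists_phiProfile_le_exp (hp : 1 < p) (hω : 0 ≤ ω) :
    ∃ C, ∀ t, phiProfile γ p ω t ≤ C * exp (-(√ω * t)) := by
  have hp1 : p - 1 ≠ 0 := by linarith
  refine ⟨((p + 1) * ω / 2) ^ (1 / (p - 1)) * 2 ^ (2 / (p - 1)) *
    exp (-(2 / (p - 1) * _root_.artanh (γ / (2 * √ω)))), fun t => ?_⟩
  refine (sechPow.le_exp (rpow_nonneg (by nlinarith) _)
    (div_nonneg zero_le_two (by linarith)) t).trans_eq ?_
  rw [mul_assoc _ (exp _), ← exp_add]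
  congr 2
  field_simp
  ring

theorem abs_deriv_phiProfile_le (hp : 1 < p) (hω : 0 ≤ ω) (t : ℝ) :
    |deriv (phiProfile γ p ω) t| ≤ √ω * phiProfile γ p ω t := by
  have hp1 : 0 < p - 1 := by linarith
  unfold phiProfile
  refine (sechPow.abs_deriv_le (rpow_nonneg (by nlinarith) _)
    (div_nonneg zero_le_two hp1.le) t).trans_eq ?_
  rw [abs_of_nonneg (by positivity)]
  field_simp

theorem contDiff_phiProfile {n : WithTop ℕ∞} : ContDiff ℝ n (phiProfile γ p ω) :=
  sechPow.contDiff

end Profile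

theorem stmt0_general (γ p ω : ℝ) (hp : 1 < p) (hω : γ ^ 2 / 4 < ω) :
    (∀ x : ℝ, phi γ p ω (-x) = phi γ p ω x) ∧
    (∀ x : ℝ, 0 < phi γ p ω x) ∧
    Continuous (phi γ p ω) ∧
    ContDiffOn ℝ 2 (phi γ p ω) {(0:ℝ)}ᶜ ∧
    (∀ x : ℝ, x ≠ 0 →
      -(deriv (deriv (phi γ p ω)) x) + ω * phi γ p ω x - phi γ p ω x ^ p = 0) ∧
    (∃ dplus dminus : ℝ,
      HasDerivWithinAt (phi γ p ω) dplus (Ici (0:ℝ)) 0 ∧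
      HasDerivWithinAt (phi γ p ω) dminus (Iic (0:ℝ)) 0 ∧
      dplus - dminus = -γ * phi γ p ω 0 ∧
      dplus = -(γ / 2) * phi γ p ω 0) ∧
    MemLp (phi γ p ω) 2 volume ∧
    MemLp (deriv (phi γ p ω)) 2 volume := by
  have hω0 : 0 < ω := (by positivity : 0 ≤ γ ^ 2 / 4).trans_lt hω
  have hF0 := hasDerivAt_phiProfile_zero hp hω
  obtain ⟨C, hC⟩ := exists_phiProfile_le_exp (γ := γ) hp hω0.le
  have hcont : Continuous fun x => phiProfile γ p ω |x| :=
    (contDiff_phiProfile (n := 0)).continuous.comp continuous_abs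
  have hL2 : MemLp (fun x => phiProfile γ p ω |x|) 2 volume :=
    ((memLp_two_exp_neg_mul_abs (sqrt_pos.2 hω0)).const_mul C).of_le
      hcont.aestronglyMeasurable
      (ae_of_all _ fun x => by
        rw [norm_of_nonneg (phiProfile_pos (by linarith) hω0 _).le]
        exact (hC _).trans (le_abs_self _))
  simp only [phi_eq_phiProfile_abs (γ := γ) (by linarith : -1 ≤ p) hω0.le]
  refine ⟨fun x => by rw [abs_neg], fun x => phiProfile_pos (by linarith) hω0 _,
    hcont,
    fun x hx => (contDiff_phiProfile.contDiffAt.comp x (contDiffAt_abs hx)).contDiffWithinAt,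
    fun x hx => by rw [deriv_deriv_comp_abs hx, deriv_deriv_phiProfile hp hω0]; ring,
    ⟨_, _, hF0.comp_abs_Ici, hF0.comp_abs_Iic, by rw [abs_zero]; ring, by rw [abs_zero]⟩,
    hL2, (hL2.const_mul √ω).of_le (measurable_deriv _).aestronglyMeasurable ?_⟩
  filter_upwards [volume.ae_ne 0] with x hx
  rw [norm_eq_abs, abs_deriv_comp_abs hx, norm_of_nonneg
    (mul_nonneg (sqrt_nonneg ω) (phiProfile_pos (by linarith) hω0 _).le)]
  exact abs_deriv_phiProfile_le hp hω0.le _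

/-- basic properties of the explicit standing wave profile `φ_ω`. -/
theorem stmt0 (γ p ω : ℝ) (hγ : 0 < γ) (hp : 1 < p) (hω : γ ^ 2 / 4 < ω) :
    (∀ x : ℝ, phi γ p ω (-x) = phi γ p ω x) ∧
    (∀ x : ℝ, 0 < phi γ p ω x) ∧
    Continuous (phi γ p ω) ∧
    ContDiffOn ℝ 2 (phi γ p ω) {(0:ℝ)}ᶜ ∧
    (∀ x : ℝ, x ≠ 0 →
      -(deriv (deriv (phi γ p ω)) x) + ω * phi γ p ω x - phi γ p ω x ^ p = 0) ∧
    (∃ dplus dminus : ℝ,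
      HasDerivWithinAt (phi γ p ω) dplus (Ici (0:ℝ)) 0 ∧
      HasDerivWithinAt (phi γ p ω) dminus (Iic (0:ℝ)) 0 ∧
      dplus - dminus = -γ * phi γ p ω 0 ∧
      dplus = -(γ / 2) * phi γ p ω 0) ∧
    MemLp (phi γ p ω) 2 volume ∧
    MemLp (deriv (phi γ p ω)) 2 volume :=
  stmt0_general γ p ω hp hω
end
end

section
/- For every p > 5 there exists a unique ξ ∈ (0,1) such that ((p-5)/(p-1)) ∫_ξ^1 (1 - s²)^{2/(p-1) - 1} ds = ξ (1 - ξ²)^{2/(p-1) - 1}. (This unique solution is denoted ξ₀(p).) -/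
open MeasureTheory Set
open scoped ENNReal

noncomputable section

/-! With `c > 0` and `-1 < r < 0`, the function
`g ξ = ξ (1 - ξ²)^r - c ∫_ξ^1 (1 - s²)^r ds` is continuous and strictly increasing on `[0, 1)`
(the first term increases, the integral decreases), negative at `0`, and tends to `+∞` as
`ξ → 1⁻` because `r < 0` while the integral tends to `0`. Hence it has exactly one zero, and that
zero lies in `(0, 1)`. For `p > 5` one takes `r = 2/(p-1) - 1` and `c = (p-5)/(p-1)`. -/

open intervalIntegral Filter Topology

theorem existsUnique_mem_Ioo_eq_zero_of_strictMonoOn {g : ℝ → ℝ} {a b : ℝ} (hab : a < b)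
    (hcont : ContinuousOn g (Ico a b)) (hmono : StrictMonoOn g (Ico a b)) (ha : g a < 0)
    (hb : Tendsto g (𝓝[<] b) atTop) : ∃! ξ, ξ ∈ Ioo a b ∧ g ξ = 0 := by
  obtain ⟨ξ, hξ, hgξ⟩ := isPreconnected_Ico.intermediate_value_Ici (left_mem_Ico.2 hab)
    (le_principal_iff.2 (Ico_mem_nhdsLT hab)) hcont hb (show g a ≤ 0 from ha.le)
  have hξa : a ≠ ξ := by
    rintro rfl
    exact ha.ne hgξ
  refine ⟨ξ, ⟨⟨hξ.1.lt_of_ne hξa, hξ.2⟩, hgξ⟩, fun η hη => ?_⟩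
  exact hmono.injOn (Ioo_subset_Ico_self hη.1) hξ (hη.2.trans hgξ.symm)

section OneSubSqRpow

variable {r : ℝ}

theorem intervalIntegrable_one_sub_sq_rpow (hr : -1 < r) :
    IntervalIntegrable (fun s : ℝ => (1 - s ^ 2) ^ r) volume 0 1 := by
  have h_sub : IntervalIntegrable (fun s : ℝ => (1 - s) ^ r) volume 0 1 := by
    simpa using ((intervalIntegrable_rpow' (a := 0) (b := 1) hr).comp_sub_left 1).symm
  have h_add : ContinuousOn (fun s : ℝ => (1 + s) ^ r) (uIcc 0 1) := by
    refine ContinuousOn.rpow_const (by fun_prop) fun s hs => Or.inl ?_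
    rw [uIcc_of_le zero_le_one] at hs
    linarith [hs.1]
  refine (h_sub.mul_continuousOn h_add).congr_uIoo fun s hs => ?_
  rw [uIoo_of_le zero_le_one] at hs
  change (1 - s) ^ r * (1 + s) ^ r = _
  rw [← Real.mul_rpow (by linarith [hs.2]) (by linarith [hs.1])]
  ring_nf

theorem one_sub_sq_rpow_pos {s : ℝ} (hs : s ∈ Ioo (-1) 1) : 0 < (1 - s ^ 2) ^ r :=
  Real.rpow_pos_of_pos (by nlinarith [hs.1, hs.2]) r

theorem antitoneOn_integral_one_sub_sq_rpow (hr : -1 < r) :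
    AntitoneOn (fun ξ => ∫ s in ξ..1, (1 - s ^ 2) ^ r) (Icc 0 1) := by
  intro x hx y hy hxy
  refine integral_mono_interval hxy hy.2 le_rfl ?_
    ((intervalIntegrable_one_sub_sq_rpow hr).mono_set ?_)
  · refine ae_restrict_of_forall_mem measurableSet_Ioc fun s hs => ?_
    exact Real.rpow_nonneg (by nlinarith [hx.1, hs.1, hs.2]) r
  · simp only [uIcc_of_le zero_le_one, uIcc_of_le hx.2]
    exact Icc_subset_Icc hx.1 le_rfl

theorem continuousOn_integral_one_sub_sq_rpow (hr : -1 < r) :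
    ContinuousOn (fun ξ => ∫ s in ξ..1, (1 - s ^ 2) ^ r) (Icc 0 1) := by
  have h_int := (intervalIntegrable_iff_integrableOn_Icc_of_le zero_le_one).1
    (intervalIntegrable_one_sub_sq_rpow hr)
  rw [← uIcc_of_le zero_le_one] at h_int ⊢
  exact continuousOn_primitive_interval_left h_int

theorem strictMonoOn_mul_one_sub_sq_rpow (hr : r ≤ 0) :
    StrictMonoOn (fun ξ : ℝ => ξ * (1 - ξ ^ 2) ^ r) (Ico 0 1) := by
  intro x hx y hy hxy
  calc x * (1 - x ^ 2) ^ r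
      < y * (1 - x ^ 2) ^ r := by
        gcongr
        exact one_sub_sq_rpow_pos ⟨by linarith [hx.1], hx.2⟩
    _ ≤ y * (1 - y ^ 2) ^ r := by
        gcongr ?_ * ?_
        · linarith [hx.1]
        · exact Real.rpow_le_rpow_of_nonpos (by nlinarith [hy.1, hy.2]) (by nlinarith [hx.1]) hr

theorem tendsto_mul_one_sub_sq_rpow_atTop (hr : r < 0) :
    Tendsto (fun ξ : ℝ => ξ * (1 - ξ ^ 2) ^ r) (𝓝[<] 1) atTop := by
  have h_base : Tendsto (fun ξ : ℝ => 1 - ξ ^ 2) (𝓝[<] 1) (𝓝[>] 0) := by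
    refine tendsto_nhdsWithin_iff.2 ⟨?_, ?_⟩
    · exact ((continuous_const.sub (continuous_pow 2)).tendsto' 1 0 (by norm_num)).mono_left
        nhdsWithin_le_nhds
    · filter_upwards [Ioo_mem_nhdsLT zero_lt_one] with ξ hξ
      show 0 < 1 - ξ ^ 2
      nlinarith [hξ.1, hξ.2]
  exact (tendsto_nhdsWithin_of_tendsto_nhds tendsto_id).pos_mul_atTop one_pos
    ((tendsto_rpow_neg_nhdsGT_zero hr).comp h_base)

theorem existsUnique_mul_integral_one_sub_sq_rpow_eq (hr₁ : -1 < r) (hr₀ : r < 0) {c : ℝ}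
    (hc : 0 < c) :
    ∃! ξ : ℝ, ξ ∈ Ioo (0:ℝ) 1 ∧
      c * ∫ s in ξ..1, (1 - s ^ 2) ^ r = ξ * (1 - ξ ^ 2) ^ r := by
  set I : ℝ → ℝ := fun ξ => ∫ s in ξ..1, (1 - s ^ 2) ^ r
  have hI := continuousOn_integral_one_sub_sq_rpow hr₁
  have hI_one : Tendsto I (𝓝[<] 1) (𝓝 0) := by
    have := (hI 1 ⟨zero_le_one, le_rfl⟩).tendsto
    rw [nhdsWithin_Icc_eq_nhdsLE zero_lt_one] at this
    simpa [I] using this.mono_left (nhdsWithin_mono _ Iio_subset_Iic_self)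
  have hI_zero : 0 < I 0 := intervalIntegral_pos_of_pos_on
    (intervalIntegrable_one_sub_sq_rpow hr₁) (fun s hs => one_sub_sq_rpow_pos
      ⟨by linarith [hs.1], hs.2⟩) zero_lt_one
  have h_cont : ContinuousOn (fun ξ : ℝ => ξ * (1 - ξ ^ 2) ^ r) (Ico 0 1) :=
    continuousOn_id.mul <| ContinuousOn.rpow_const (by fun_prop) fun ξ hξ =>
      Or.inl (by nlinarith [hξ.1, hξ.2])
  have h_top : Tendsto (fun ξ : ℝ => ξ * (1 - ξ ^ 2) ^ r - c * I ξ) (𝓝[<] 1) atTop := by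
    simpa [sub_eq_add_neg] using
      (tendsto_mul_one_sub_sq_rpow_atTop hr₀).atTop_add (hI_one.const_mul c).neg
  have h_mono : StrictMonoOn (fun ξ : ℝ => ξ * (1 - ξ ^ 2) ^ r - c * I ξ) (Ico 0 1) := by
    intro x hx y hy hxy
    have h_int := antitoneOn_integral_one_sub_sq_rpow hr₁ (Ico_subset_Icc_self hx)
      (Ico_subset_Icc_self hy) hxy.le
    have h_mul := strictMonoOn_mul_one_sub_sq_rpow hr₀.le hx hy hxy
    dsimp only at h_int h_mul ⊢
    linarith [mul_le_mul_of_nonneg_left h_int hc.le]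
  obtain ⟨ξ, ⟨hξ, hgξ⟩, huniq⟩ := existsUnique_mem_Ioo_eq_zero_of_strictMonoOn
    (g := fun ξ => ξ * (1 - ξ ^ 2) ^ r - c * I ξ) zero_lt_one
    (h_cont.sub (continuousOn_const.mul (hI.mono Ico_subset_Icc_self))) h_mono
    (by simpa using mul_pos hc hI_zero) h_top
  refine ⟨ξ, ⟨hξ, by linarith⟩, fun η hη => huniq η ⟨hη.1, by linarith [hη.2]⟩⟩

end OneSubSqRpow

/-- existence and uniqueness of `ξ₀(p)`. -/
theorem stmt4 (p : ℝ) (hp : 5 < p) :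
    ∃! ξ : ℝ, ξ ∈ Ioo (0:ℝ) 1 ∧
      (p - 5) / (p - 1) * ∫ s in ξ..1, (1 - s ^ 2) ^ (2 / (p - 1) - 1) =
        ξ * (1 - ξ ^ 2) ^ (2 / (p - 1) - 1) := by
  have hp₁ : 0 < p - 1 := by linarith
  have h_pos : 0 < 2 / (p - 1) := by positivity
  have h_lt_one : 2 / (p - 1) < 1 := by
    rw [div_lt_one hp₁]
    linarith
  exact existsUnique_mul_integral_one_sub_sq_rpow_eq (by linarith) (by linarith)
    (div_pos (by linarith) hp₁)
end
end

section
/- For every p > 5 there exists a unique ξ ∈ (0,1) such that ((p-5)/(p-1)) ∫_ξ^1 (1 - s²)^{2/(p-1)} ds = ξ (1 - ξ²)^{2/(p-1)}. (This unique solution is denoted ξ₁(p).) -/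
open MeasureTheory Set
open scoped ENNReal

noncomputable section

/-! With `c = (p - 5)/(p - 1)` and `α = 2/(p - 1)`, the equation says that
`G ξ = c ∫_ξ^1 (1 - s²)^α ds - ξ (1 - ξ²)^α` vanishes. Differentiating,
`G' ξ = (1 - ξ²)^(α - 1) ((c + 1 + 2α) ξ² - (c + 1))`, so `G` strictly decreases on `[0, r]` and
strictly increases on `[r, 1]`, where `r² = (c + 1)/(c + 1 + 2α) < 1`. As `G 1 = 0`, `G` is negative
on `[r, 1)`; as `G 0 = c ∫_0^1 (1 - s²)^α ds > 0`, it has exactly one zero in `(0, 1)`, and that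
zero lies in `(0, r)`. -/

theorem existsUnique_zero_of_strictAntiOn_of_strictMonoOn {g : ℝ → ℝ} {a r b : ℝ}
    (har : a ≤ r) (hrb : r < b) (hcont : ContinuousOn g (Icc a r))
    (hanti : StrictAntiOn g (Icc a r)) (hmono : StrictMonoOn g (Icc r b))
    (ha : 0 < g a) (hb : g b = 0) : ∃! x, x ∈ Ioo a b ∧ g x = 0 := by
  have hneg : ∀ x ∈ Ico r b, g x < 0 := fun x hx =>
    hb ▸ hmono ⟨hx.1, hx.2.le⟩ ⟨hrb.le, le_rfl⟩ hx.2
  obtain ⟨x, hx, hx0⟩ := intermediate_value_Ioo' har hcont ⟨hneg r ⟨le_rfl, hrb⟩, ha⟩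
  refine ⟨x, ⟨⟨hx.1, hx.2.trans hrb⟩, hx0⟩, fun y ⟨hy, hy0⟩ => ?_⟩
  have hyr : y < r := not_le.mp fun h => (hneg y ⟨h, hy.2⟩).ne hy0
  exact hanti.injOn ⟨hy.1.le, hyr.le⟩ ⟨hx.1.le, hx.2.le⟩ (hy0.trans hx0.symm)

namespace TailGap

variable {c α : ℝ}

def tailGap (c α ξ : ℝ) : ℝ := c * (∫ s in ξ..1, (1 - s ^ 2) ^ α) - ξ * (1 - ξ ^ 2) ^ α

def turningPoint (c α : ℝ) : ℝ := Real.sqrt ((c + 1) / (c + 1 + 2 * α))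

theorem continuous_one_sub_sq_rpow (hα : 0 ≤ α) : Continuous fun s : ℝ => (1 - s ^ 2) ^ α :=
  (continuous_const.sub (continuous_pow 2)).rpow_const fun _ => Or.inr hα

theorem hasDerivAt_integral_one_sub_sq_rpow (hα : 0 ≤ α) (ξ : ℝ) :
    HasDerivAt (fun u => ∫ s in u..1, (1 - s ^ 2) ^ α) (-(1 - ξ ^ 2) ^ α) ξ :=
  have hf := continuous_one_sub_sq_rpow hα
  intervalIntegral.integral_hasDerivAt_left (hf.intervalIntegrable _ _)
    (hf.stronglyMeasurableAtFilter _ _) hf.continuousAt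

theorem continuous_tailGap (hα : 0 ≤ α) : Continuous (tailGap c α) :=
  (continuous_const.mul (continuous_iff_continuousAt.2 fun ξ =>
      (hasDerivAt_integral_one_sub_sq_rpow hα ξ).continuousAt)).sub
    (continuous_id.mul (continuous_one_sub_sq_rpow hα))

theorem hasDerivAt_tailGap (hα : 0 ≤ α) {ξ : ℝ} (hξ : ξ ^ 2 < 1) :
    HasDerivAt (tailGap c α)
      ((1 - ξ ^ 2) ^ (α - 1) * ((c + 1 + 2 * α) * ξ ^ 2 - (c + 1))) ξ := by
  have hpos : 0 < 1 - ξ ^ 2 := sub_pos.2 hξ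
  have hf : HasDerivAt (fun s : ℝ => (1 - s ^ 2) ^ α)
      (-(2 * ξ * α * (1 - ξ ^ 2) ^ (α - 1))) ξ := by
    simpa using ((hasDerivAt_pow 2 ξ).const_sub 1).rpow_const (p := α) (Or.inl hpos.ne')
  refine (((hasDerivAt_integral_one_sub_sq_rpow hα ξ).const_mul c).sub
    ((hasDerivAt_id' ξ).mul hf)).congr_deriv ?_
  rw [Real.rpow_sub_one hpos.ne']
  field_simp
  ring

theorem tailGap_zero_pos (hc : 0 < c) (hα : 0 ≤ α) : 0 < tailGap c α 0 := by
  have hint : 0 < ∫ s in (0 : ℝ)..1, (1 - s ^ 2) ^ α :=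
    intervalIntegral.intervalIntegral_pos_of_pos_on
      ((continuous_one_sub_sq_rpow hα).intervalIntegrable _ _)
      (fun s hs => Real.rpow_pos_of_pos (by nlinarith [hs.1, hs.2]) _) one_pos
  simpa [tailGap] using mul_pos hc hint

theorem tailGap_one (hα : 0 < α) : tailGap c α 1 = 0 := by
  simp [tailGap, Real.zero_rpow hα.ne']

theorem turningPoint_pos (hc : 0 < c + 1) (hα : 0 ≤ α) : 0 < turningPoint c α :=
  Real.sqrt_pos.2 (div_pos hc (by linarith))

theorem turningPoint_lt_one (hc : 0 < c + 1) (hα : 0 < α) : turningPoint c α < 1 :=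
  (Real.sqrt_lt' one_pos).2 (by rw [one_pow, div_lt_one (by linarith)]; linarith)

theorem mul_sq_turningPoint (hc : 0 < c + 1) (hα : 0 ≤ α) :
    (c + 1 + 2 * α) * turningPoint c α ^ 2 = c + 1 := by
  rw [turningPoint, Real.sq_sqrt (div_pos hc (by linarith)).le, mul_div_cancel₀ _ (by linarith)]

theorem strictAntiOn_tailGap (hc : 0 < c + 1) (hα : 0 < α) :
    StrictAntiOn (tailGap c α) (Icc 0 (turningPoint c α)) := by
  refine strictAntiOn_of_deriv_neg (convex_Icc _ _) (continuous_tailGap hα.le).continuousOn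
    fun x hx => ?_
  rw [interior_Icc] at hx
  have hx1 : x ^ 2 < 1 := by nlinarith [hx.1, hx.2, turningPoint_lt_one hc hα]
  rw [(hasDerivAt_tailGap hα.le hx1).deriv]
  refine mul_neg_of_pos_of_neg (Real.rpow_pos_of_pos (sub_pos.2 hx1) _) ?_
  have hκ : 0 < c + 1 + 2 * α := by linarith
  nlinarith [mul_sq_turningPoint hc hα.le,
    mul_pos (mul_pos hκ (sub_pos.2 hx.2)) (add_pos hx.1 (hx.1.trans hx.2))]

theorem strictMonoOn_tailGap (hc : 0 < c + 1) (hα : 0 < α) :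
    StrictMonoOn (tailGap c α) (Icc (turningPoint c α) 1) := by
  refine strictMonoOn_of_deriv_pos (convex_Icc _ _) (continuous_tailGap hα.le).continuousOn
    fun x hx => ?_
  rw [interior_Icc] at hx
  have hr := turningPoint_pos hc hα.le
  have hx1 : x ^ 2 < 1 := by nlinarith [hx.1, hx.2]
  rw [(hasDerivAt_tailGap hα.le hx1).deriv]
  refine mul_pos (Real.rpow_pos_of_pos (sub_pos.2 hx1) _) ?_
  have hκ : 0 < c + 1 + 2 * α := by linarith
  nlinarith [mul_sq_turningPoint hc hα.le,
    mul_pos (mul_pos hκ (sub_pos.2 hx.1)) (add_pos hr (hr.trans hx.1))]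

theorem existsUnique_tailGap_eq_zero (hc : 0 < c) (hα : 0 < α) :
    ∃! ξ, ξ ∈ Ioo 0 1 ∧ tailGap c α ξ = 0 :=
  have hc1 : 0 < c + 1 := by linarith
  existsUnique_zero_of_strictAntiOn_of_strictMonoOn (turningPoint_pos hc1 hα.le).le
    (turningPoint_lt_one hc1 hα) (continuous_tailGap hα.le).continuousOn
    (strictAntiOn_tailGap hc1 hα) (strictMonoOn_tailGap hc1 hα)
    (tailGap_zero_pos hc hα.le) (tailGap_one hα)

end TailGap

open TailGap in
/-- existence and uniqueness of `ξ₁(p)`. -/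
theorem stmt5 (p : ℝ) (hp : 5 < p) :
    ∃! ξ : ℝ, ξ ∈ Ioo (0:ℝ) 1 ∧
      (p - 5) / (p - 1) * ∫ s in ξ..1, (1 - s ^ 2) ^ (2 / (p - 1)) =
        ξ * (1 - ξ ^ 2) ^ (2 / (p - 1)) := by
  have h := existsUnique_tailGap_eq_zero (c := (p - 5) / (p - 1)) (α := 2 / (p - 1))
    (div_pos (by linarith) (by linarith)) (div_pos two_pos (by linarith))
  simpa only [tailGap, sub_eq_zero] using h
end
end

section
/- For every p > 5 there exists a unique ξ ∈ (0,1) such that ((p-5)/2) ∫_ξ^1 (1 - s²)^{2/(p-1)} ds = ξ (1 - ξ²)^{2/(p-1)}. (This unique solution is denoted ξ₂(p).) -/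
open MeasureTheory Set
open scoped ENNReal

noncomputable section

/- With `c = (p - 5)/2 > 0`, `α = 2/(p - 1) > 0` and `f s = (1 - s²)^α`, the map
`g ξ = c ∫_ξ^1 f - ξ f(ξ)` is positive at `0`, vanishes at `1`, and
`g'(ξ) = (1 - ξ²)^(α-1) ((c + 1 + 2α) ξ² - (c + 1))` changes sign exactly once on `(0, 1)`.
So `g` decreases to a negative minimum and then increases back to `g 1 = 0`: it has exactly one
zero in `(0, 1)`, lying on the decreasing branch. -/

theorem existsUnique_mem_Ioo_eq_zero_of_strictAntiOn_strictMonoOn {g : ℝ → ℝ} {a m b : ℝ}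
    (ham : a ≤ m) (hmb : m < b) (hg : ContinuousOn g (Icc a m)) (ha : 0 < g a) (hb : g b = 0)
    (hanti : StrictAntiOn g (Icc a m)) (hmono : StrictMonoOn g (Icc m b)) :
    ∃! x, x ∈ Ioo a b ∧ g x = 0 := by
  have hm : g m < 0 := hb ▸ hmono (left_mem_Icc.2 hmb.le) (right_mem_Icc.2 hmb.le) hmb
  obtain ⟨x, hx, hgx⟩ := intermediate_value_Icc' ham hg ⟨hm.le, ha.le⟩
  have hax : a < x := hx.1.lt_of_ne (by rintro rfl; exact ha.ne' hgx)
  have hxm : x < m := hx.2.lt_of_ne (by rintro rfl; exact hm.ne hgx)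
  refine ⟨x, ⟨⟨hax, hxm.trans hmb⟩, hgx⟩, fun y ⟨hy, hgy⟩ => ?_⟩
  rcases le_or_gt y m with hym | hmy
  · exact hanti.injOn ⟨hy.1.le, hym⟩ hx (hgy.trans hgx.symm)
  · linarith [hmono ⟨hmy.le, hy.2.le⟩ (right_mem_Icc.2 hmb.le) hy.2]

theorem continuous_one_sub_sq_rpow {α : ℝ} (hα : 0 ≤ α) :
    Continuous fun s : ℝ => (1 - s ^ 2) ^ α :=
  (continuous_const.sub (continuous_pow 2)).rpow_const fun _ => Or.inr hα

def tailDefect (c α ξ : ℝ) : ℝ :=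
  c * (∫ s in ξ..1, (1 - s ^ 2) ^ α) - ξ * (1 - ξ ^ 2) ^ α

section TailDefect

variable {c α : ℝ}

theorem continuous_tailDefect (hα : 0 ≤ α) : Continuous (tailDefect c α) := by
  have hf := continuous_one_sub_sq_rpow hα
  have hI : Continuous fun ξ : ℝ => ∫ s in ξ..1, (1 - s ^ 2) ^ α := by
    have hF := intervalIntegral.continuous_primitive
      (fun a b => hf.intervalIntegrable (μ := volume) a b) 1
    exact hF.neg.congr fun ξ => (intervalIntegral.integral_symm 1 ξ).symm
  exact (continuous_const.mul hI).sub (continuous_id.mul hf)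

theorem tailDefect_one (hα : 0 < α) : tailDefect c α 1 = 0 := by
  simp [tailDefect, Real.zero_rpow hα.ne']

theorem tailDefect_zero_pos (hc : 0 < c) (hα : 0 ≤ α) : 0 < tailDefect c α 0 := by
  have hI : 0 < ∫ s in (0:ℝ)..1, (1 - s ^ 2) ^ α :=
    intervalIntegral.intervalIntegral_pos_of_pos_on
      ((continuous_one_sub_sq_rpow hα).intervalIntegrable 0 1)
      (fun s hs => Real.rpow_pos_of_pos (by nlinarith [hs.1, hs.2]) α) one_pos
  simpa [tailDefect] using mul_pos hc hI

theorem hasDerivAt_tailDefect (hα : 0 ≤ α) {ξ : ℝ} (hξ : ξ ^ 2 < 1) :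
    HasDerivAt (tailDefect c α)
      ((1 - ξ ^ 2) ^ (α - 1) * ((c + 1 + 2 * α) * ξ ^ 2 - (c + 1))) ξ := by
  have hf := continuous_one_sub_sq_rpow hα
  have h1 : 0 < 1 - ξ ^ 2 := by linarith
  have hI : HasDerivAt (fun u : ℝ => ∫ s in u..1, (1 - s ^ 2) ^ α) (-(1 - ξ ^ 2) ^ α) ξ :=
    intervalIntegral.integral_hasDerivAt_left (hf.intervalIntegrable ξ 1)
      (hf.stronglyMeasurableAtFilter _ _) hf.continuousAt
  have hq : HasDerivAt (fun s : ℝ => 1 - s ^ 2) (-(2 * ξ)) ξ := by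
    simpa using (hasDerivAt_pow 2 ξ).const_sub 1
  have hf' := hq.rpow_const (p := α) (Or.inl h1.ne')
  have hsplit : (1 - ξ ^ 2) ^ α = (1 - ξ ^ 2) ^ (α - 1) * (1 - ξ ^ 2) := by
    rw [← Real.rpow_add_one h1.ne', sub_add_cancel]
  refine ((hI.const_mul c).sub ((hasDerivAt_id' ξ).mul hf')).congr_deriv ?_
  rw [hsplit]
  ring

theorem existsUnique_mem_Ioo_tailDefect_eq_zero (hc : 0 < c) (hα : 0 < α) :
    ∃! ξ, ξ ∈ Ioo 0 1 ∧ tailDefect c α ξ = 0 := by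
  set B := c + 1 + 2 * α
  have hB : 0 < B := by positivity
  have hq : 0 < (c + 1) / B := by positivity
  set m := Real.sqrt ((c + 1) / B)
  have hm0 : 0 < m := Real.sqrt_pos.2 hq
  have hm1 : m < 1 := (Real.sqrt_lt' one_pos).2 (by rw [one_pow, div_lt_one hB]; linarith)
  have hmB : m ^ 2 * B = c + 1 := by rw [Real.sq_sqrt hq.le, div_mul_cancel₀ _ hB.ne']
  have hderiv : ∀ x ∈ Ioo (0:ℝ) 1, deriv (tailDefect c α) x =
      (1 - x ^ 2) ^ (α - 1) * (B * x ^ 2 - (c + 1)) := fun x hx =>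
    (hasDerivAt_tailDefect hα.le (by nlinarith [hx.1, hx.2])).deriv
  have hpow : ∀ x ∈ Ioo (0:ℝ) 1, 0 < (1 - x ^ 2) ^ (α - 1) := fun x hx =>
    Real.rpow_pos_of_pos (by nlinarith [hx.1, hx.2]) _
  have hcont := continuous_tailDefect (c := c) hα.le
  refine existsUnique_mem_Ioo_eq_zero_of_strictAntiOn_strictMonoOn hm0.le hm1 hcont.continuousOn
    (tailDefect_zero_pos hc hα.le) (tailDefect_one hα) ?_ ?_
  · refine strictAntiOn_of_deriv_neg (convex_Icc 0 m) hcont.continuousOn fun x hx => ?_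
    rw [interior_Icc] at hx
    have hx1 : x ∈ Ioo (0:ℝ) 1 := ⟨hx.1, hx.2.trans hm1⟩
    rw [hderiv x hx1]
    refine mul_neg_of_pos_of_neg (hpow x hx1) ?_
    nlinarith [mul_lt_mul_of_pos_right (pow_lt_pow_left₀ hx.2 hx.1.le two_ne_zero) hB]
  · refine strictMonoOn_of_deriv_pos (convex_Icc m 1) hcont.continuousOn fun x hx => ?_
    rw [interior_Icc] at hx
    have hx1 : x ∈ Ioo (0:ℝ) 1 := ⟨hm0.trans hx.1, hx.2⟩
    rw [hderiv x hx1]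
    refine mul_pos (hpow x hx1) ?_
    nlinarith [mul_lt_mul_of_pos_right (pow_lt_pow_left₀ hx.1 hm0.le two_ne_zero) hB]

end TailDefect

/-- existence and uniqueness of `ξ₂(p)`. -/
theorem stmt6 (p : ℝ) (hp : 5 < p) :
    ∃! ξ : ℝ, ξ ∈ Ioo (0:ℝ) 1 ∧
      (p - 5) / 2 * ∫ s in ξ..1, (1 - s ^ 2) ^ (2 / (p - 1)) =
        ξ * (1 - ξ ^ 2) ^ (2 / (p - 1)) := by
  have hc : 0 < (p - 5) / 2 := by linarith
  have hα : 0 < 2 / (p - 1) := div_pos two_pos (by linarith)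
  simpa only [tailDefect, sub_eq_zero] using existsUnique_mem_Ioo_tailDefect_eq_zero hc hα
end
end

section
/- Let γ > 0 and p > 5, and let v ∈ H¹(ℝ) satisfy E(v) > 0 and v(0) ≠ 0. Then there exist 0 < λ₁ < λ₂ < λ₃ < λ₄ such that the function g(λ) = E(v^λ) on (0,∞) satisfies: g is strictly decreasing on (0,λ₁) and on (λ₃,∞) and strictly increasing on (λ₁,λ₃); g(λ) < 0 for λ ∈ (0,λ₂) ∪ (λ₄,∞) and g(λ) > 0 for λ ∈ (λ₂,λ₄); and g(λ) < g(λ₃) for all λ ∈ (0,λ₃) ∪ (λ₃,∞). -/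
open MeasureTheory Set
open scoped ENNReal

noncomputable section

/-!
With `a = ‖v'‖² / 2`, `b = γ |v(0)|² / 2`, `c = ‖v‖_{p+1}^{p+1} / (p + 1)` and `q = (p - 1) / 2 > 2`,
the scaling gives `E(v^λ) = a λ² - b λ - c λ^q`. Here `b > 0` because `v(0) ≠ 0`; `c > 0` because
an `H¹` function is bounded, so that `|v|^{p+1} ≤ ‖v‖_∞^{p-1} |v|²` is integrable, and `v` does not
vanish near `0`; and `a - b - c = E(v) > 0`.

The derivative `2 a λ - b - c q λ^{q-1}` is strictly concave on `[0, ∞)`, equals `-b < 0` at `0`,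
tends to `-∞`, and is positive somewhere in `(0, 1)` by the mean value theorem, since the profile
vanishes at `0` and equals `E(v) > 0` at `1`. Hence it has exactly two zeros `λ₁ < λ₃`, which give
the monotonicity, and `λ₂ ∈ (λ₁, λ₃)`, `λ₄ > λ₃` are the zeros of the profile on either side of
its maximum at `λ₃`.
-/

open Filter

theorem StrictConvexOn.const_mul {E : Type*} [AddCommMonoid E] [Module ℝ E] {s : Set E}
    {f : E → ℝ} {c : ℝ} (hf : StrictConvexOn ℝ s f) (hc : 0 < c) :
    StrictConvexOn ℝ s fun x => c * f x :=
  ⟨hf.1, fun x hx y hy hxy α β hα hβ hαβ => by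
    have := mul_lt_mul_of_pos_left (hf.2 hx hy hxy hα hβ hαβ) hc
    simp only [smul_eq_mul] at this ⊢
    linarith⟩

theorem strictConcaveOn_linear_sub_rpow {m k c r : ℝ} (hc : 0 < c) (hr : 1 < r) :
    StrictConcaveOn ℝ (Ici 0) fun l : ℝ => m * l - k - c * l ^ r := by
  have hlin : ConcaveOn ℝ (Ici 0) fun l : ℝ => m * l - k :=
    ⟨convex_Ici 0, fun x _ y _ α β _ _ hαβ => by
      simp only [smul_eq_mul]
      exact le_of_eq (by linear_combination (-k) * hαβ)⟩
  exact hlin.sub_strictConvexOn ((strictConvexOn_rpow hr).const_mul hc)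

theorem StrictConcaveOn.exists_sign_pattern {f : ℝ → ℝ} {a ξ : ℝ}
    (hf : StrictConcaveOn ℝ (Ici a) f) (hcont : ContinuousOn f (Ici a))
    (ha : f a < 0) (haξ : a < ξ) (hξ : 0 < f ξ) (hf_atTop : ∀ᶠ l in atTop, f l < 0) :
    ∃ l₁ l₃, a < l₁ ∧ l₁ < ξ ∧ ξ < l₃ ∧ (∀ l ∈ Ico a l₁, f l < 0) ∧
      (∀ l ∈ Ioo l₁ l₃, 0 < f l) ∧ ∀ l ∈ Ioi l₃, f l < 0 := by
  obtain ⟨l₁, ⟨hal₁, hl₁ξ⟩, hf₁⟩ :=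
    intermediate_value_Ioo haξ.le (hcont.mono Icc_subset_Ici_self) ⟨ha, hξ⟩
  obtain ⟨R, hfR, hξR⟩ := (hf_atTop.and (eventually_gt_atTop ξ)).exists
  obtain ⟨l₃, ⟨hξl₃, -⟩, hf₃⟩ :=
    intermediate_value_Ioo' hξR.le (hcont.mono fun x hx => haξ.le.trans hx.1) ⟨hfR, hξ⟩
  have between {x y z : ℝ} (hx : a ≤ x) (hxz : x < z) (hzy : z < y) : min (f x) (f y) < f z :=
    hf.lt_on_openSegment hx (hx.trans (hxz.trans hzy).le) (hxz.trans hzy).ne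
      (by rw [openSegment_eq_Ioo (hxz.trans hzy)]; exact ⟨hxz, hzy⟩)
  refine ⟨l₁, l₃, hal₁, hl₁ξ, hξl₃, fun l hl => ?_, fun l hl => ?_, fun l hl => ?_⟩
  · have := between hl.1 hl.2 hl₁ξ
    rw [hf₁] at this
    exact (min_lt_iff.1 this).resolve_right hξ.not_gt
  · simpa [hf₁, hf₃] using between hal₁.le hl.1 hl.2
  · have := between haξ.le hξl₃ hl
    rw [hf₃] at this
    exact (min_lt_iff.1 this).resolve_left hξ.not_gt

theorem eventually_mul_rpow_lt_mul_rpow {s r : ℝ} (hsr : s < r) (m : ℝ) {C : ℝ} (hC : 0 < C) :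
    ∀ᶠ l : ℝ in atTop, m * l ^ s < C * l ^ r := by
  filter_upwards [(tendsto_rpow_atTop (sub_pos.2 hsr)).eventually_gt_atTop (m / C),
    eventually_gt_atTop 0] with l hl hl0
  rw [← sub_add_cancel r s, Real.rpow_add hl0, ← mul_assoc]
  exact mul_lt_mul_of_pos_right (by rwa [div_lt_iff₀' hC] at hl) (Real.rpow_pos_of_pos hl0 s)

theorem exists_zeros_of_strictAntiOn_strictMonoOn_strictAntiOn {g : ℝ → ℝ} {l₁ l₃ : ℝ}
    (hcont : ContinuousOn g (Ici l₁)) (h0 : g 0 = 0) (hl₁ : 0 < l₁) (hl₁₃ : l₁ < l₃)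
    (hanti₁ : StrictAntiOn g (Icc 0 l₁)) (hmono : StrictMonoOn g (Icc l₁ l₃))
    (hanti₃ : StrictAntiOn g (Ici l₃)) (hl₃ : 0 < g l₃) (hg_atTop : ∀ᶠ l in atTop, g l < 0) :
    ∃ l₂ l₄, l₁ < l₂ ∧ l₂ < l₃ ∧ l₃ < l₄ ∧
      (∀ l ∈ Ioo 0 l₂ ∪ Ioi l₄, g l < 0) ∧ (∀ l ∈ Ioo l₂ l₄, 0 < g l) ∧
      ∀ l ∈ Ioi 0, l ≠ l₃ → g l < g l₃ := by
  have hneg₁ : ∀ l ∈ Ioc 0 l₁, g l < 0 := fun l hl =>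
    h0 ▸ hanti₁ ⟨le_rfl, hl₁.le⟩ ⟨hl.1.le, hl.2⟩ hl.1
  obtain ⟨l₂, ⟨h₁₂, h₂₃⟩, hg₂⟩ := intermediate_value_Ioo hl₁₃.le
    (hcont.mono Icc_subset_Ici_self) ⟨hneg₁ l₁ ⟨hl₁, le_rfl⟩, hl₃⟩
  obtain ⟨R, hgR, hR⟩ := (hg_atTop.and (eventually_gt_atTop l₃)).exists
  obtain ⟨l₄, ⟨h₃₄, -⟩, hg₄⟩ := intermediate_value_Ioo' hR.le
    (hcont.mono fun x hx => hl₁₃.le.trans hx.1) ⟨hgR, hl₃⟩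
  refine ⟨l₂, l₄, h₁₂, h₂₃, h₃₄, ?_, fun l hl => ?_, fun l hl hne => ?_⟩
  · rintro l (⟨hl0, hl2⟩ | hl4)
    · rcases le_or_gt l l₁ with h | h
      · exact hneg₁ l ⟨hl0, h⟩
      · exact hg₂ ▸ hmono ⟨h.le, (hl2.trans h₂₃).le⟩ ⟨h₁₂.le, h₂₃.le⟩ hl2
    · exact hg₄ ▸ hanti₃ h₃₄.le (h₃₄.trans hl4).le hl4
  · rcases le_or_gt l l₃ with h | h
    · exact hg₂ ▸ hmono ⟨h₁₂.le, h₂₃.le⟩ ⟨(h₁₂.trans hl.1).le, h⟩ hl.1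
    · exact hg₄ ▸ hanti₃ h.le h₃₄.le hl.2
  · rcases hne.lt_or_gt with h | h
    · rcases le_or_gt l l₁ with h' | h'
      · exact (hneg₁ l ⟨hl, h'⟩).trans hl₃
      · exact hmono ⟨h'.le, h.le⟩ ⟨hl₁₃.le, le_rfl⟩ h
    · exact hanti₃ self_mem_Ici h.le h

def scalingProfile (a b c q l : ℝ) : ℝ := a * l ^ 2 - b * l - c * l ^ q

section ScalingProfile

variable {a b c q : ℝ}

theorem scalingProfile_zero (hq : q ≠ 0) : scalingProfile a b c q 0 = 0 := by
  simp [scalingProfile, Real.zero_rpow hq]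

theorem scalingProfile_one : scalingProfile a b c q 1 = a - b - c := by
  simp [scalingProfile]

theorem continuous_scalingProfile (hq : 0 ≤ q) : Continuous (scalingProfile a b c q) := by
  unfold scalingProfile
  fun_prop (disch := exact hq)

theorem hasDerivAt_scalingProfile {l : ℝ} (hl : 0 < l) :
    HasDerivAt (scalingProfile a b c q) (2 * a * l - b - c * q * l ^ (q - 1)) l :=
  ((((hasDerivAt_pow 2 l).const_mul a).sub ((hasDerivAt_id l).const_mul b)).sub
    ((Real.hasDerivAt_rpow_const (p := q) (Or.inl hl.ne')).const_mul c)).congr_deriv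
    (by norm_num; ring)

theorem eventually_scalingProfile_neg (hb : 0 < b) (hc : 0 < c) (hq : 2 < q) :
    ∀ᶠ l in atTop, scalingProfile a b c q l < 0 := by
  filter_upwards [eventually_mul_rpow_lt_mul_rpow hq a hc, eventually_gt_atTop 0] with l hl hl0
  rw [Real.rpow_two] at hl
  unfold scalingProfile
  nlinarith [mul_pos hb hl0]

theorem exists_strictAntiOn_strictMonoOn_strictAntiOn_scalingProfile (hb : 0 < b) (hc : 0 < c)
    (hq : 2 < q) (habc : b + c < a) :
    ∃ l₁ l₃, 0 < l₁ ∧ l₁ < 1 ∧ l₁ < l₃ ∧ StrictAntiOn (scalingProfile a b c q) (Icc 0 l₁) ∧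
      StrictMonoOn (scalingProfile a b c q) (Icc l₁ l₃) ∧
      StrictAntiOn (scalingProfile a b c q) (Ici l₃) := by
  set φ : ℝ → ℝ := fun l => 2 * a * l - b - c * q * l ^ (q - 1)
  have hcont : Continuous (scalingProfile a b c q) := continuous_scalingProfile (by linarith)
  have hderiv : ∀ l ∈ Ioi (0 : ℝ), HasDerivAt (scalingProfile a b c q) (φ l) l := fun l hl =>
    hasDerivAt_scalingProfile hl
  obtain ⟨ξ, hξ, hφξ⟩ := exists_hasDerivAt_eq_slope _ φ one_pos hcont.continuousOn
    fun x hx => hderiv x hx.1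
  have hφξ_pos : 0 < φ ξ := by
    rw [hφξ, scalingProfile_zero (by linarith), scalingProfile_one]
    linarith
  have hφ0 : φ 0 < 0 := by simp [φ, Real.zero_rpow (by linarith : q - 1 ≠ 0), hb]
  have hφ_atTop : ∀ᶠ l in atTop, φ l < 0 := by
    filter_upwards [eventually_mul_rpow_lt_mul_rpow (by linarith : (1 : ℝ) < q - 1) (2 * a)
      (by positivity : 0 < c * q)] with l hl
    rw [Real.rpow_one] at hl
    linarith
  obtain ⟨l₁, l₃, hl₁, hl₁ξ, hξl₃, hφneg₁, hφpos, hφneg₃⟩ :=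
    (strictConcaveOn_linear_sub_rpow (by positivity) (by linarith)).exists_sign_pattern
      (by fun_prop (disch := linarith)) hφ0 hξ.1 hφξ_pos hφ_atTop
  have hl₃ : 0 < l₃ := hl₁.trans (hl₁ξ.trans hξl₃)
  refine ⟨l₁, l₃, hl₁, hl₁ξ.trans hξ.2, hl₁ξ.trans hξl₃,
    strictAntiOn_of_deriv_neg (convex_Icc 0 l₁) hcont.continuousOn fun l hl => ?_,
    strictMonoOn_of_deriv_pos (convex_Icc l₁ l₃) hcont.continuousOn fun l hl => ?_,
    strictAntiOn_of_deriv_neg (convex_Ici l₃) hcont.continuousOn fun l hl => ?_⟩ <;>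
    simp only [interior_Icc, interior_Ici] at hl
  · rw [(hderiv l hl.1).deriv]
    exact hφneg₁ l (Ioo_subset_Ico_self hl)
  · rw [(hderiv l (hl₁.trans hl.1)).deriv]
    exact hφpos l hl
  · rw [(hderiv l (hl₃.trans hl)).deriv]
    exact hφneg₃ l hl

theorem exists_shape_of_eqOn_scalingProfile {g : ℝ → ℝ} (hb : 0 < b) (hc : 0 < c) (hq : 2 < q)
    (habc : b + c < a) (hg : EqOn (scalingProfile a b c q) g (Ici 0)) :
    ∃ l1 l2 l3 l4 : ℝ, 0 < l1 ∧ l1 < l2 ∧ l2 < l3 ∧ l3 < l4 ∧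
      StrictAntiOn g (Ioo 0 l1) ∧ StrictAntiOn g (Ioi l3) ∧ StrictMonoOn g (Ioo l1 l3) ∧
      (∀ l ∈ Ioo (0:ℝ) l2 ∪ Ioi l4, g l < 0) ∧ (∀ l ∈ Ioo l2 l4, 0 < g l) ∧
      (∀ l ∈ Ioi (0:ℝ), l ≠ l3 → g l < g l3) := by
  obtain ⟨l₁, l₃, hl₁, hl₁1, hl₁₃, hanti₁, hmono, hanti₃⟩ :=
    exists_strictAntiOn_strictMonoOn_strictAntiOn_scalingProfile hb hc hq habc
  have hG1 : 0 < scalingProfile a b c q 1 := by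
    rw [scalingProfile_one]
    linarith
  have hGl₃ : 0 < scalingProfile a b c q l₃ := by
    rcases le_or_gt 1 l₃ with h | h
    · exact hG1.trans_le (hmono.monotoneOn ⟨hl₁1.le, h⟩ ⟨hl₁₃.le, le_rfl⟩ h)
    · exact hG1.trans (hanti₃ self_mem_Ici h.le h)
  have hg_on {s : Set ℝ} (hs : ∀ x ∈ s, 0 ≤ x) : EqOn (scalingProfile a b c q) g s :=
    hg.mono hs
  replace hanti₁ := hanti₁.congr (hg_on fun x hx => hx.1)
  replace hmono := hmono.congr (hg_on fun x hx => hl₁.le.trans hx.1)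
  replace hanti₃ := hanti₃.congr (hg_on fun x hx => (hl₁.trans hl₁₃).le.trans hx)
  obtain ⟨l₂, l₄, h₁₂, h₂₃, h₃₄, hneg, hpos, hmax⟩ :=
    exists_zeros_of_strictAntiOn_strictMonoOn_strictAntiOn
      ((continuous_scalingProfile (by linarith)).continuousOn.congr
        (hg_on fun x hx => hl₁.le.trans hx).symm)
      (hg self_mem_Ici ▸ scalingProfile_zero (by linarith)) hl₁ hl₁₃ hanti₁ hmono hanti₃
      (hg (hl₁.trans hl₁₃).le ▸ hGl₃)
      ((eventually_scalingProfile_neg hb hc hq).mp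
        ((eventually_ge_atTop 0).mono fun l hl hGl => hg hl ▸ hGl))
  exact ⟨l₁, l₂, l₃, l₄, hl₁, h₁₂, h₂₃, h₃₄, hanti₁.mono Ioo_subset_Icc_self,
    hanti₃.mono Ioi_subset_Ici_self, hmono.mono Ioo_subset_Icc_self, hneg, hpos, hmax⟩

end ScalingProfile

theorem MeasureTheory.MemLp.intervalIntegrable {E : Type*} [NormedAddCommGroup E] {f : ℝ → E}
    {p : ℝ≥0∞} (hf : MemLp f p volume) (hp : 1 ≤ p) (a b : ℝ) :
    IntervalIntegrable f volume a b :=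
  intervalIntegrable_iff.2 <|
    ((hf.locallyIntegrable hp).integrableOn_isCompact isCompact_uIcc).mono_set uIoc_subset_uIcc

theorem intervalIntegral_le_integral_of_nonneg {f : ℝ → ℝ} (hf : Integrable f) (h0 : 0 ≤ f)
    {x y : ℝ} (hxy : x ≤ y) : ∫ t in x..y, f t ≤ ∫ t, f t := by
  rw [intervalIntegral.integral_of_le hxy]
  exact setIntegral_le_integral hf (Eventually.of_forall h0)

theorem exists_mem_Icc_le_integral {f : ℝ → ℝ} (hf : Continuous f) (hint : Integrable f)
    (h0 : 0 ≤ f) (x : ℝ) : ∃ y ∈ Icc x (x + 1), f y ≤ ∫ t, f t := by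
  obtain ⟨y, hy, hmin⟩ := isCompact_Icc.exists_isMinOn (nonempty_Icc.2 (by linarith : x ≤ x + 1))
    hf.continuousOn
  refine ⟨y, hy, ?_⟩
  calc f y = ∫ _ in x..x + 1, f y := by simp
    _ ≤ ∫ t in x..x + 1, f t :=
      intervalIntegral.integral_mono_on (by linarith) intervalIntegrable_const
        hint.intervalIntegrable fun t ht => hmin ht
    _ ≤ ∫ t, f t := intervalIntegral_le_integral_of_nonneg hint h0 (by linarith)

theorem le_one_add_sq_div_two (t : ℝ) : t ≤ (1 + t ^ 2) / 2 := by
  linarith [two_mul_le_add_sq 1 t]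

namespace MemH1

variable {v : ℝ → ℂ}

theorem integrable_sq_norm (hv : MemH1 v) : Integrable fun x => ‖v x‖ ^ 2 :=
  (memLp_two_iff_integrable_sq_norm hv.2.1.1).1 hv.2.1

theorem norm_sub_le (hv : MemH1 v) {x y : ℝ} (hxy : x ≤ y) :
    ‖v y - v x‖ ≤ ((y - x) + gradSq v) / 2 := by
  obtain ⟨-, -, hd2, hrep⟩ := hv
  have hD2 := (memLp_two_iff_integrable_sq_norm hd2.1).1 hd2
  calc ‖v y - v x‖ = ‖∫ t in x..y, deriv v t‖ := by
        rw [hrep y, hrep x, add_sub_add_left_eq_sub,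
          intervalIntegral.integral_interval_sub_left (hd2.intervalIntegrable one_le_two 0 y)
            (hd2.intervalIntegrable one_le_two 0 x)]
    _ ≤ ∫ t in x..y, ‖deriv v t‖ := intervalIntegral.norm_integral_le_integral_norm hxy
    _ ≤ ∫ t in x..y, (1 + ‖deriv v t‖ ^ 2) / 2 :=
        intervalIntegral.integral_mono_on hxy (hd2.intervalIntegrable one_le_two x y).norm
          ((intervalIntegrable_const.add hD2.intervalIntegrable).div_const 2)
          fun t _ => le_one_add_sq_div_two _
    _ = ((y - x) + ∫ t in x..y, ‖deriv v t‖ ^ 2) / 2 := by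
        rw [intervalIntegral.integral_div,
          intervalIntegral.integral_add intervalIntegrable_const hD2.intervalIntegrable]
        simp
    _ ≤ ((y - x) + gradSq v) / 2 := by
        gcongr
        exact intervalIntegral_le_integral_of_nonneg hD2 (fun t => by positivity) hxy

theorem exists_bound (hv : MemH1 v) : ∃ M, ∀ x, ‖v x‖ ≤ M := by
  refine ⟨(1 + l2Sq v) / 2 + (1 + gradSq v) / 2, fun x => ?_⟩
  obtain ⟨y, hy, hvy⟩ := exists_mem_Icc_le_integral (f := fun t => ‖v t‖ ^ 2)
    (hv.1.norm.pow 2) hv.integrable_sq_norm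
    (fun t => by positivity) x
  calc ‖v x‖ ≤ ‖v y‖ + ‖v y - v x‖ := norm_le_norm_add_norm_sub _ _
    _ ≤ (1 + l2Sq v) / 2 + ((y - x) + gradSq v) / 2 := by
        gcongr
        · exact (le_one_add_sq_div_two _).trans (by rw [l2Sq]; gcongr)
        · exact hv.norm_sub_le hy.1
    _ ≤ (1 + l2Sq v) / 2 + (1 + gradSq v) / 2 := by linarith [hy.2]

theorem integrable_norm_rpow (hv : MemH1 v) {r : ℝ} (hr : 2 ≤ r) :
    Integrable fun x => ‖v x‖ ^ r := by
  obtain ⟨M, hM⟩ := hv.exists_bound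
  refine (hv.integrable_sq_norm.const_mul (M ^ (r - 2))).mono'
    (hv.1.norm.rpow_const fun _ => Or.inr (by linarith)).aestronglyMeasurable
    (Eventually.of_forall fun x => ?_)
  rw [Real.norm_of_nonneg (by positivity), ← sub_add_cancel r 2,
    Real.rpow_add' (norm_nonneg _) (by linarith), Real.rpow_two, sub_add_cancel]
  gcongr
  exact hM x

theorem lpPow_pos (hv : MemH1 v) {p : ℝ} (hp : 1 ≤ p) {x₀ : ℝ} (hx₀ : v x₀ ≠ 0) :
    0 < lpPow p v :=
  integral_pos_of_integrable_nonneg_nonzero (hv.1.norm.rpow_const fun _ => Or.inr (by linarith))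
    (hv.integrable_norm_rpow (by linarith)) (fun x => by positivity)
    (by positivity)

end MemH1

theorem deriv_scale (l : ℝ) (v : ℝ → ℂ) (x : ℝ) :
    deriv (scale l v) x = (Real.sqrt l : ℂ) * (l • deriv v (l * x)) := by
  unfold scale
  rw [deriv_const_mul_field']
  exact congrArg _ (deriv_comp_mul_left l v x)

theorem gradSq_scale {l : ℝ} (hl : 0 < l) (v : ℝ → ℂ) :
    gradSq (scale l v) = l ^ 2 * gradSq v := by
  have hnorm (x : ℝ) : ‖deriv (scale l v) x‖ ^ 2 = l ^ 3 * ‖deriv v (l * x)‖ ^ 2 := by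
    rw [deriv_scale, norm_mul, norm_smul, Complex.norm_real, Real.norm_of_nonneg hl.le,
      Real.norm_of_nonneg (Real.sqrt_nonneg l), mul_pow, mul_pow, Real.sq_sqrt hl.le]
    ring
  simp_rw [gradSq, hnorm, integral_const_mul, Measure.integral_comp_mul_left
    (fun y => ‖deriv v y‖ ^ 2) l, smul_eq_mul, abs_of_pos (inv_pos.2 hl)]
  field_simp

theorem lpPow_scale {l : ℝ} (hl : 0 < l) (p : ℝ) (v : ℝ → ℂ) :
    lpPow p (scale l v) = l ^ ((p - 1) / 2) * lpPow p v := by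
  have hnorm (x : ℝ) : ‖scale l v x‖ ^ (p + 1) = l ^ ((p + 1) / 2) * ‖v (l * x)‖ ^ (p + 1) := by
    rw [scale, norm_mul, Complex.norm_real, Real.norm_of_nonneg (Real.sqrt_nonneg l),
      Real.mul_rpow (Real.sqrt_nonneg l) (norm_nonneg _), Real.sqrt_eq_rpow,
      ← Real.rpow_mul hl.le]
    ring_nf
  simp_rw [lpPow, hnorm, integral_const_mul, Measure.integral_comp_mul_left
    (fun y => ‖v y‖ ^ (p + 1)) l, smul_eq_mul, abs_of_pos (inv_pos.2 hl), ← mul_assoc,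
    ← Real.rpow_neg_one l, ← Real.rpow_add hl]
  ring_nf

theorem En_scale {l : ℝ} (hl : 0 ≤ l) (γ : ℝ) {p : ℝ} (hp : 1 < p) (v : ℝ → ℂ) :
    En γ p (scale l v) = gradSq v / 2 * l ^ 2 - γ * ‖v 0‖ ^ 2 / 2 * l -
      lpPow p v / (p + 1) * l ^ ((p - 1) / 2) := by
  rcases hl.eq_or_lt with rfl | hl
  · simp [En, gradSq, lpPow, scale, deriv_scale, Real.zero_rpow (by linarith : p + 1 ≠ 0),
      Real.zero_rpow (by linarith : (p - 1) / 2 ≠ 0)]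
  have hv0 : ‖scale l v 0‖ ^ 2 = l * ‖v 0‖ ^ 2 := by
    rw [scale, mul_zero, norm_mul, Complex.norm_real, Real.norm_of_nonneg (Real.sqrt_nonneg l),
      mul_pow, Real.sq_sqrt hl.le]
  rw [En, gradSq_scale hl, lpPow_scale hl, hv0]
  ring

/-- the shape of `λ ↦ E(v^λ)` when `E(v) > 0` and `v(0) ≠ 0`. -/
theorem stmt8 (γ p : ℝ) (hγ : 0 < γ) (hp : 5 < p) (v : ℝ → ℂ)
    (hv : MemH1 v) (hE : 0 < En γ p v) (hv0 : v 0 ≠ 0) :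
    ∃ l1 l2 l3 l4 : ℝ, 0 < l1 ∧ l1 < l2 ∧ l2 < l3 ∧ l3 < l4 ∧
      StrictAntiOn (fun l => En γ p (scale l v)) (Ioo 0 l1) ∧
      StrictAntiOn (fun l => En γ p (scale l v)) (Ioi l3) ∧
      StrictMonoOn (fun l => En γ p (scale l v)) (Ioo l1 l3) ∧
      (∀ l ∈ Ioo (0:ℝ) l2 ∪ Ioi l4, En γ p (scale l v) < 0) ∧
      (∀ l ∈ Ioo l2 l4, 0 < En γ p (scale l v)) ∧
      (∀ l ∈ Ioi (0:ℝ), l ≠ l3 → En γ p (scale l v) < En γ p (scale l3 v)) := by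
  have hp₁ : 1 < p := by linarith
  have hb : 0 < γ * ‖v 0‖ ^ 2 / 2 := by
    have := norm_pos_iff.2 hv0
    positivity
  have hc : 0 < lpPow p v / (p + 1) := div_pos (hv.lpPow_pos hp₁.le hv0) (by linarith)
  have habc : γ * ‖v 0‖ ^ 2 / 2 + lpPow p v / (p + 1) < gradSq v / 2 := by
    rw [En] at hE
    linarith
  exact exists_shape_of_eqOn_scalingProfile hb hc (by linarith) habc
    fun l hl => (En_scale hl γ hp₁ v).symm
end
end
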